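/- Let X be a geodesic metric space of curvature ≥ −κ (κ ≥ 0), let λ be a geodesic loop based at a point x, and let r: [0,∞) → X be a geodesic ray starting at x. If the curvature is 0 (Euclidean cone manifold), then the angle at x between the ray r and either initial direction of the loop λ is at least π/2. -/

import Mathlib

open Real

/-- The Euclidean comparison angle at the apex of a hinge with side lengths `a, b` and
opposite side `c`. -/
noncomputable def euclCompAngle (a b c : ℝ) : ℝ :=
  Real.arccos ((a ^ 2 + b ^ 2 - c ^ 2) / (2 * a * b))

/-- Nonnegative curvature in the Alexandrov sense, via the `(1+3)`-point comparison. -/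
def CurvGeZero (X : Type*) [MetricSpace X] : Prop :=
  ∀ p x y z : X, p ≠ x → p ≠ y → p ≠ z →
    euclCompAngle (dist p x) (dist p y) (dist x y) +
      euclCompAngle (dist p y) (dist p z) (dist y z) +
        euclCompAngle (dist p z) (dist p x) (dist z x) ≤ 2 * π

/-- The cosine-law argument for an honest triangle lies in `[-1,1]`. -/
lemma cosarg_bounds {a b c : ℝ} (ha : 0 < a) (hb : 0 < b) (hc : 0 ≤ c)
    (h1 : c ≤ a + b) (h2 : b ≤ a + c) (h3 : a ≤ b + c) :
    -1 ≤ (a ^ 2 + b ^ 2 - c ^ 2) / (2 * a * b) ∧ (a ^ 2 + b ^ 2 - c ^ 2) / (2 * a * b) ≤ 1 := by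
  have hab : 0 < 2 * a * b := by positivity
  constructor
  · rw [le_div_iff₀ hab]
    nlinarith [mul_nonneg (by linarith : (0:ℝ) ≤ a + b - c) (by linarith : (0:ℝ) ≤ a + b + c)]
  · rw [div_le_one hab]
    nlinarith [mul_nonneg (by linarith : (0:ℝ) ≤ c - a + b) (by linarith : (0:ℝ) ≤ c + a - b)]

lemma arccos_add_le_pi {A B : ℝ} (hA1 : -1 ≤ A) (hA2 : A ≤ 1) (hB1 : -1 ≤ B) (hB2 : B ≤ 1)
    (h : Real.arccos A + Real.arccos B ≤ π) : 0 ≤ A + B := by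
  have h1 : Real.arccos A ≤ π - Real.arccos B := by linarith
  rw [← Real.arccos_neg] at h1
  have h2 : Real.cos (Real.arccos (-B)) ≤ Real.cos (Real.arccos A) := by
    rcases eq_or_lt_of_le h1 with he | hlt
    · rw [he]
    · exact (Real.strictAntiOn_cos ⟨Real.arccos_nonneg _, Real.arccos_le_pi _⟩
        ⟨Real.arccos_nonneg _, Real.arccos_le_pi _⟩ hlt).le
  rw [Real.cos_arccos hA1 hA2, Real.cos_arccos (by linarith) (by linarith)] at h2
  linarith

/-- The basic midpoint comparison inequality obtained from the `(1+3)`-point condition. -/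
lemma midpoint_comparison {X : Type*} [MetricSpace X] (hcurv : CurvGeZero X)
    {p a c : X} (q : X) {σ : ℝ} (hσ : 0 < σ)
    (hpa : dist p a = σ) (hpc : dist p c = σ) (hac : dist a c = 2 * σ) :
    dist q a ^ 2 + dist q c ^ 2 ≤ 2 * dist q p ^ 2 + 2 * σ ^ 2 := by
  rcases eq_or_ne p q with rfl | hpq
  · rw [hpa, hpc]
    nlinarith [sq_nonneg (dist p p)]
  · set d : ℝ := dist p q with hd
    have hd0 : 0 < d := dist_pos.mpr hpq
    have hpa' : p ≠ a := by
      intro h; rw [h] at hpa; simp at hpa; linarith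
    have hpc' : p ≠ c := by
      intro h; rw [h] at hpc; simp at hpc; linarith
    have hcmp := hcurv p a q c hpa' hpq hpc'
    -- third angle is π
    have h3 : euclCompAngle (dist p c) (dist p a) (dist c a) = π := by
      rw [euclCompAngle, hpc, hpa, dist_comm c a, hac]
      have : (σ ^ 2 + σ ^ 2 - (2 * σ) ^ 2) / (2 * σ * σ) = -1 := by
        field_simp; ring
      rw [this, Real.arccos_neg_one]
    rw [h3] at hcmp
    have hsum : euclCompAngle (dist p a) (dist p q) (dist a q) +
        euclCompAngle (dist p q) (dist p c) (dist q c) ≤ π := by linarith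
    set A : ℝ := (σ ^ 2 + d ^ 2 - dist a q ^ 2) / (2 * σ * d) with hA
    set B : ℝ := (d ^ 2 + σ ^ 2 - dist q c ^ 2) / (2 * d * σ) with hB
    have e1 : dist a p = σ := by rw [dist_comm a p, hpa]
    have t1 : dist a q ≤ σ + d := by
      have := dist_triangle a p q; rw [e1, ← hd] at this; linarith
    have t2 : d ≤ σ + dist a q := by
      have := dist_triangle p a q; rw [hpa, ← hd] at this; linarith
    have t3 : σ ≤ d + dist a q := by
      have := dist_triangle p q a; rw [hpa, ← hd, dist_comm q a] at this; linarith
    have u1 : dist q c ≤ d + σ := by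
      have := dist_triangle q p c; rw [dist_comm q p, ← hd, hpc] at this; linarith
    have u2 : σ ≤ d + dist q c := by
      have := dist_triangle p q c; rw [hpc, ← hd] at this; linarith
    have u3 : d ≤ σ + dist q c := by
      have := dist_triangle p c q; rw [hpc, dist_comm c q, ← hd] at this; linarith
    have hAb := cosarg_bounds hσ hd0 dist_nonneg t1 t2 t3
    have hBb := cosarg_bounds hd0 hσ dist_nonneg u1 u2 u3
    have hEA : euclCompAngle (dist p a) (dist p q) (dist a q) = Real.arccos A := by
      rw [euclCompAngle, hpa, ← hd, hA]
    have hEB : euclCompAngle (dist p q) (dist p c) (dist q c) = Real.arccos B := by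
      rw [euclCompAngle, hpc, ← hd, hB]
    rw [hEA, hEB] at hsum
    have hpos := arccos_add_le_pi hAb.1 hAb.2 hBb.1 hBb.2 hsum
    have hABsum : A + B = (2 * σ ^ 2 + 2 * d ^ 2 - dist a q ^ 2 - dist q c ^ 2) / (2 * σ * d) := by
      rw [hA, hB]; field_simp; ring
    rw [hABsum] at hpos
    have hnum : 0 ≤ 2 * σ ^ 2 + 2 * d ^ 2 - dist a q ^ 2 - dist q c ^ 2 := by
      have hden : (0:ℝ) < 2 * σ * d := by positivity
      have := mul_nonneg hpos hden.le
      rwa [div_mul_cancel₀] at this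
      positivity
    rw [dist_comm a q] at hnum
    rw [dist_comm q p]
    linarith

lemma div_trick {Y C : ℝ} (hY : 0 < Y) (hC : 0 ≤ C) : Y / (C + 1) * C < Y := by
  rw [div_mul_eq_mul_div, div_lt_iff₀ (by linarith)]
  nlinarith

/-- A continuous, locally midpoint-concave function lies above its chords. -/
lemma concave_chord (f : ℝ → ℝ) (M : ℝ) (hM : 0 < M)
    (hf : ContinuousOn f (Set.Icc 0 M))
    (hmid : ∀ t ∈ Set.Ioo (0:ℝ) M, ∃ e > 0, ∀ σ : ℝ, 0 < σ → σ ≤ e → 0 ≤ t - σ → t + σ ≤ M →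
      f (t - σ) + f (t + σ) ≤ 2 * f t) :
    ∀ u ∈ Set.Icc (0:ℝ) M, (M - u) * f 0 + u * f M ≤ M * f u := by
  have key : ∀ η > 0, ∀ u ∈ Set.Icc (0:ℝ) M,
      (M - u) * f 0 + u * f M - η * (u * (M - u)) ≤ M * f u := by
    intro η hη
    set g : ℝ → ℝ := fun t => (M - t) * f 0 + t * f M - η * (t * (M - t)) - M * f t with hgdef
    have hgc : ContinuousOn g (Set.Icc 0 M) := by
      apply ContinuousOn.sub
      · exact (by continuity : Continuous fun t : ℝ => (M - t) * f 0 + t * f M - η * (t * (M - t))).continuousOn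
      · exact continuousOn_const.mul hf
    obtain ⟨t₀, ht₀, hmax⟩ := isCompact_Icc.exists_isMaxOn
      (Set.nonempty_Icc.mpr hM.le) hgc
    have hg0 : g 0 = 0 := by simp [hgdef]
    have hgM : g M = 0 := by simp [hgdef]
    have hgt0 : g t₀ ≤ 0 := by
      rcases eq_or_lt_of_le ht₀.1 with h0 | h0
      · rw [← h0]; exact hg0.le
      rcases eq_or_lt_of_le ht₀.2 with hM' | hM'
      · rw [hM']; exact hgM.le
      exfalso
      obtain ⟨e, he, hmm⟩ := hmid t₀ ⟨h0, hM'⟩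
      set σ : ℝ := min e (min t₀ (M - t₀)) with hσdef
      have hσ : 0 < σ := lt_min he (lt_min h0 (by linarith))
      have hσe : σ ≤ e := min_le_left _ _
      have hσt : σ ≤ t₀ := le_trans (min_le_right _ _) (min_le_left _ _)
      have hσM : σ ≤ M - t₀ := le_trans (min_le_right _ _) (min_le_right _ _)
      have hf2 := hmm σ hσ hσe (by linarith) (by linarith)
      have h1 : g (t₀ - σ) ≤ g t₀ := hmax ⟨by linarith, by linarith⟩
      have h2 : g (t₀ + σ) ≤ g t₀ := hmax ⟨by linarith, by linarith⟩
      simp only [hgdef] at h1 h2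
      have hMf2 : M * (f (t₀ - σ) + f (t₀ + σ)) ≤ M * (2 * f t₀) :=
        mul_le_mul_of_nonneg_left hf2 hM.le
      nlinarith [mul_pos hη (mul_pos hσ hσ)]
    intro u hu
    have hgu : g u ≤ 0 := le_trans (hmax hu) hgt0
    simp only [hgdef] at hgu
    linarith
  intro u hu
  by_contra hcon
  push_neg at hcon
  have hC0 : 0 ≤ u * (M - u) := mul_nonneg hu.1 (by linarith [hu.2])
  have hX : 0 < (M - u) * f 0 + u * f M - M * f u := by linarith
  have hk := key (((M - u) * f 0 + u * f M - M * f u) / (u * (M - u) + 1))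
    (div_pos hX (by linarith)) u hu
  have htrick := div_trick hX hC0
  linarith

/-- Continuity of a locally-geodesic curve. -/
lemma window_continuousOn {X : Type*} [MetricSpace X] (γ : ℝ → X) (M : ℝ)
    (hgeod : ∀ t ∈ Set.Icc (0 : ℝ) M, ∃ ε > 0,
      ∀ s ∈ Set.Icc (0 : ℝ) M, ∀ u ∈ Set.Icc (0 : ℝ) M,
        |s - t| ≤ ε → |u - t| ≤ ε → dist (γ s) (γ u) = |s - u|) :
    ContinuousOn γ (Set.Icc 0 M) := by
  intro t ht
  obtain ⟨e, he, hw⟩ := hgeod t ht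
  rw [Metric.continuousWithinAt_iff]
  intro ε' hε'
  refine ⟨min e ε', lt_min he hε', ?_⟩
  intro u hu hdu
  rw [Real.dist_eq] at hdu
  have h1 : |u - t| ≤ e := le_of_lt (lt_of_lt_of_le hdu (min_le_left _ _))
  have h2 : |t - t| ≤ e := by simp [he.le]
  have := hw u hu t ht h1 h2
  rw [this]
  exact lt_of_lt_of_le hdu (min_le_right _ _)

/-- Along any locally-geodesic curve, `dist q (γ u)² − u²` lies above its chord. -/
lemma geod_chord {X : Type*} [MetricSpace X] (hcurv : CurvGeZero X)
    (γ : ℝ → X) (M : ℝ) (hM : 0 < M)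
    (hgeod : ∀ t ∈ Set.Icc (0 : ℝ) M, ∃ ε > 0,
      ∀ s ∈ Set.Icc (0 : ℝ) M, ∀ u ∈ Set.Icc (0 : ℝ) M,
        |s - t| ≤ ε → |u - t| ≤ ε → dist (γ s) (γ u) = |s - u|)
    (q : X) :
    ∀ u ∈ Set.Icc (0:ℝ) M,
      (M - u) * dist q (γ 0) ^ 2 + u * (dist q (γ M) ^ 2 - M ^ 2) ≤
        M * (dist q (γ u) ^ 2 - u ^ 2) := by
  have hcont : ContinuousOn (fun u : ℝ => dist q (γ u) ^ 2 - u ^ 2) (Set.Icc 0 M) := by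
    have hγc := window_continuousOn γ M hgeod
    have h1 : ContinuousOn (fun u : ℝ => dist q (γ u)) (Set.Icc 0 M) :=
      Continuous.comp_continuousOn (continuous_const.dist continuous_id) hγc
    exact (h1.pow 2).sub ((continuous_id.pow 2).continuousOn)
  have hmid : ∀ t ∈ Set.Ioo (0:ℝ) M, ∃ e > 0, ∀ σ : ℝ, 0 < σ → σ ≤ e →
      0 ≤ t - σ → t + σ ≤ M →
      (dist q (γ (t - σ)) ^ 2 - (t - σ) ^ 2) + (dist q (γ (t + σ)) ^ 2 - (t + σ) ^ 2) ≤
        2 * (dist q (γ t) ^ 2 - t ^ 2) := by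
    intro t ht
    obtain ⟨e, he, hw⟩ := hgeod t ⟨ht.1.le, ht.2.le⟩
    refine ⟨e, he, ?_⟩
    intro σ hσ hσe hts htM
    have htmem : t ∈ Set.Icc (0:ℝ) M := ⟨ht.1.le, ht.2.le⟩
    have hmem1 : t - σ ∈ Set.Icc (0:ℝ) M := ⟨hts, by linarith⟩
    have hmem2 : t + σ ∈ Set.Icc (0:ℝ) M := ⟨by linarith, htM⟩
    have hpa : dist (γ t) (γ (t - σ)) = σ := by
      rw [hw t htmem (t - σ) hmem1 (by simp [he.le]) (by rw [show t - σ - t = -σ by ring]; rw [abs_neg, abs_of_pos hσ]; exact hσe)]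
      rw [show t - (t - σ) = σ by ring, abs_of_pos hσ]
    have hpc : dist (γ t) (γ (t + σ)) = σ := by
      rw [hw t htmem (t + σ) hmem2 (by simp [he.le]) (by rw [show t + σ - t = σ by ring, abs_of_pos hσ]; exact hσe)]
      rw [show t - (t + σ) = -σ by ring, abs_neg, abs_of_pos hσ]
    have hac : dist (γ (t - σ)) (γ (t + σ)) = 2 * σ := by
      rw [hw (t - σ) hmem1 (t + σ) hmem2
        (by rw [show t - σ - t = -σ by ring, abs_neg, abs_of_pos hσ]; exact hσe)
        (by rw [show t + σ - t = σ by ring, abs_of_pos hσ]; exact hσe)]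
      rw [show t - σ - (t + σ) = -(2 * σ) by ring, abs_neg, abs_of_pos (by linarith)]
    have := midpoint_comparison hcurv q hσ hpa hpc hac
    nlinarith [this]
  have := concave_chord (fun u : ℝ => dist q (γ u) ^ 2 - u ^ 2) M hM hcont hmid
  intro u hu
  have h := this u hu
  have h0 : (0:ℝ) ^ 2 = 0 := by norm_num
  nlinarith [h]

/-- Let `X` be a (geodesic) metric space of nonnegative curvature (the
curvature-`0` case, e.g. a Euclidean cone manifold), let `γ : [0,L] → X` be a geodesic loop
based at `x` and let `r : [0,∞) → X` be a geodesic ray starting at `x`.  Then the angle at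
`x` between the ray `r` and either initial direction of the loop `γ` is at least `π/2`:
for every `ε > 0` the comparison angles at small scales are eventually `≥ π/2 − ε`. -/
theorem angle_ray_loop_ge_pi_div_two
    {X : Type*} [MetricSpace X]
    (hcurv : CurvGeZero X)
    (x : X) (L : ℝ) (hL : 0 < L) (γ : ℝ → X)
    (hγ0 : γ 0 = x) (hγL : γ L = x)
    (hγgeod : ∀ t ∈ Set.Icc (0 : ℝ) L, ∃ ε > 0,
      ∀ s ∈ Set.Icc (0 : ℝ) L, ∀ u ∈ Set.Icc (0 : ℝ) L,
        |s - t| ≤ ε → |u - t| ≤ ε → dist (γ s) (γ u) = |s - u|)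
    (r : ℝ → X) (hr0 : r 0 = x)
    (hray : ∀ s t : ℝ, 0 ≤ s → 0 ≤ t → dist (r s) (r t) = |s - t|) :
    ∀ ε > 0, ∃ δ > 0, ∀ s t : ℝ, 0 < s → s < δ → 0 < t → t < δ →
      π / 2 - ε ≤ euclCompAngle s t (dist (r s) (γ t)) ∧
        π / 2 - ε ≤ euclCompAngle s t (dist (r s) (γ (L - t))) := by
  intro ε hε
  obtain ⟨ε₀, hε₀, h₀⟩ := hγgeod 0 ⟨le_refl 0, hL.le⟩
  obtain ⟨εL, hεL, hLw⟩ := hγgeod L ⟨hL.le, le_refl L⟩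
  refine ⟨min (min ε₀ εL) L, by positivity, ?_⟩
  intro s t hs hsδ ht htδ
  have htε₀ : t ≤ ε₀ := le_trans htδ.le (le_trans (min_le_left _ _) (min_le_left _ _))
  have htεL : t ≤ εL := le_trans htδ.le (le_trans (min_le_left _ _) (min_le_right _ _))
  have htL : t ≤ L := le_trans htδ.le (min_le_right _ _)
  -- ray window hypothesis on [0, T]
  have hraywin : ∀ T : ℝ, ∀ u ∈ Set.Icc (0 : ℝ) T, ∃ ε > 0,
      ∀ a ∈ Set.Icc (0 : ℝ) T, ∀ b ∈ Set.Icc (0 : ℝ) T,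
        |a - u| ≤ ε → |b - u| ≤ ε → dist (r a) (r b) = |a - b| := by
    intro T u _
    exact ⟨1, one_pos, fun a ha b hb _ _ => hray a b ha.1 hb.1⟩
  have hdrx : ∀ T : ℝ, 0 ≤ T → dist (r T) x = T := by
    intro T hT
    rw [← hr0, hray T 0 hT le_rfl]
    simp [abs_of_nonneg hT]
  -- the far bound from the loop chord
  have hfar : ∀ (T : ℝ), 0 < T → ∀ u ∈ Set.Icc (0:ℝ) L,
      T ^ 2 + u ^ 2 - u * L ≤ dist (r T) (γ u) ^ 2 := by
    intro T hT u hu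
    have h := geod_chord hcurv γ L hL hγgeod (r T) u hu
    rw [hγ0, hγL, hdrx T hT.le] at h
    -- (L-u) T² + u (T² − L²) ≤ L (d² − u²)
    nlinarith [hu.1, hu.2, hL]
  -- the near bound from the ray chord
  have hnear : ∀ q : X, dist q x = t →
      (∀ T : ℝ, 0 < T → t ^ 2 - t * L ≤ dist q (r T) ^ 2 - T ^ 2) →
      s ^ 2 + t ^ 2 ≤ dist (r s) q ^ 2 := by
    intro q hqx hqfar
    by_contra hcon
    push_neg at hcon
    set c := s ^ 2 + t ^ 2 - dist (r s) q ^ 2 with hc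
    have hc0 : 0 < c := by rw [hc]; linarith
    set T : ℝ := s * t * L / c + s + 1 with hT
    have hTpos : 0 < T := by
      have : 0 ≤ s * t * L / c := by positivity
      rw [hT]; linarith
    have hsT : s ∈ Set.Icc (0:ℝ) T := by
      constructor
      · exact hs.le
      · have : 0 ≤ s * t * L / c := by positivity
        rw [hT]; linarith
    have h := geod_chord hcurv r T hTpos (hraywin T) q s hsT
    rw [hr0] at h
    have hq0 : dist q x = t := hqx
    rw [hq0] at h
    have hfarT := hqfar T hTpos
    -- (T - s) t² + s (dist q (r T)² − T²) ≤ T (dist q (r s)² − s²)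
    have hstep : (T - s) * t ^ 2 + s * (t ^ 2 - t * L) ≤ T * (dist q (r s) ^ 2 - s ^ 2) := by
      have : s * (t ^ 2 - t * L) ≤ s * (dist q (r T) ^ 2 - T ^ 2) :=
        mul_le_mul_of_nonneg_left hfarT hs.le
      linarith
    -- hence T (s² + t²) − s t L ≤ T dist²
    have hTq : T * c ≤ s * t * L := by
      rw [hc, dist_comm q (r s)] at *
      nlinarith [hstep]
    have hTbig : s * t * L < T * c := by
      have h1 : s * t * L / c * c = s * t * L := div_mul_cancel₀ _ (ne_of_gt hc0)
      rw [hT]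
      nlinarith [mul_pos hs hc0, hc0]
    linarith
  -- the two distances from x
  have hdt : dist (γ t) x = t := by
    rw [← hγ0, dist_comm]
    have := h₀ 0 ⟨le_refl 0, hL.le⟩ t ⟨ht.le, htL⟩ (by simp [hε₀.le]) (by rw [sub_zero, abs_of_pos ht]; exact htε₀)
    rw [this, zero_sub, abs_neg, abs_of_pos ht]
  have hdLt : dist (γ (L - t)) x = t := by
    rw [← hγL, dist_comm]
    have := hLw L ⟨hL.le, le_refl L⟩ (L - t) ⟨by linarith, by linarith⟩ (by simp [hεL.le])
      (by rw [show L - t - L = -t by ring, abs_neg, abs_of_pos ht]; exact htεL)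
    rw [this, show L - (L - t) = t by ring, abs_of_pos ht]
  -- conclusion for a given distance bound
  have hang : ∀ d : ℝ, s ^ 2 + t ^ 2 ≤ d ^ 2 → π / 2 - ε ≤ euclCompAngle s t d := by
    intro d hd
    rw [euclCompAngle]
    have harg : (s ^ 2 + t ^ 2 - d ^ 2) / (2 * s * t) ≤ 0 :=
      div_nonpos_of_nonpos_of_nonneg (by linarith) (by positivity)
    rw [Real.arccos_eq_pi_div_two_sub_arcsin]
    have := Real.arcsin_nonpos.mpr harg
    linarith
  have hb1 : s ^ 2 + t ^ 2 ≤ dist (r s) (γ t) ^ 2 := by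
    apply hnear (γ t) hdt
    intro T hT
    have := hfar T hT t ⟨ht.le, htL⟩
    rw [dist_comm (γ t) (r T)]
    nlinarith
  have hb2 : s ^ 2 + t ^ 2 ≤ dist (r s) (γ (L - t)) ^ 2 := by
    apply hnear (γ (L - t)) hdLt
    intro T hT
    have := hfar T hT (L - t) ⟨by linarith, by linarith⟩
    rw [dist_comm (γ (L - t)) (r T)]
    nlinarith
  exact ⟨hang _ hb1, hang _ hb2⟩
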